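/- arXiv:cs/9809012 — 2 statements merged into one kernel-verified Lean document; each statement's English description precedes it below -/
import Mathlib

section
/- Let G be a multigraph on n ≥ 2 vertices with minimum cut value c ≥ 1, and suppose each edge fails independently with probability p ∈ [0,1], where p^c = n^{-(2+δ)} for some real δ > 0. Then for every real α ≥ 1, the probability that some cut of G of value at least α·c fails (i.e., all edges of its edge set fail) is at most n^{-αδ}(1 + 2/δ). -/
open scoped Classical

/-- A multigraph on vertex type `V` is given by an edge-index type `E` together with a map
`ends : E → Sym2 V` assigning to each edge its (unordered) pair of endpoints; the hypothesis
`∀ e, ¬ (ends e).IsDiag` says that the two endpoints of every edge are distinct.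
`survGraph ends F` is the simple graph on `V` whose adjacencies are given by the edges of the
multigraph that survive when the edges in `F` fail. -/
def survGraph {V E : Type} (ends : E → Sym2 V) (F : Finset E) : SimpleGraph V :=
  SimpleGraph.fromRel (fun x y => ∃ e, e ∉ F ∧ ends e = s(x, y))

/-- The number of connected components of the graph surviving after the edges in `F` fail. -/
noncomputable def numComponents {V E : Type} (ends : E → Sym2 V) (F : Finset E) : ℕ :=
  Nat.card (survGraph ends F).ConnectedComponent

/-- Edge `e` crosses the 2-way cut determined by the vertex set `A` (one endpoint in `A`,
one endpoint outside `A`). -/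
def crosses {V E : Type} (ends : E → Sym2 V) (A : Finset V) (e : E) : Prop :=
  (∃ x ∈ ends e, x ∈ A) ∧ (∃ x ∈ ends e, x ∉ A)

/-- The edge set of the 2-way cut determined by the vertex set `A`. -/
noncomputable def cutEdges {V E : Type} [Fintype E] (ends : E → Sym2 V) (A : Finset V) :
    Finset E :=
  Finset.univ.filter (crosses ends A)

/-- The value of the 2-way cut determined by the vertex set `A`. -/
noncomputable def cutValue {V E : Type} [Fintype E] (ends : E → Sym2 V) (A : Finset V) : ℕ :=
  (cutEdges ends A).card

/-- When each edge fails independently with probability `p`, this is the probability that the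
(random) set of failed edges is a member of `S`. -/
noncomputable def failurePr {E : Type} [Fintype E] (p : ℝ) (S : Finset (Finset E)) : ℝ :=
  ∑ F ∈ S, p ^ F.card * (1 - p) ^ (Fintype.card E - F.card)

/-!
Karger's bound on near-minimum cuts, by double counting over edge contractions. A multigraph on
`n` vertices with minimum cut `c` has at least `n c / 2` edges; a cut of value at most `s c / 2`
is crossed by at most `s c / 2` of them, and contracting any other edge keeps it as a cut of a
multigraph on `n - 1` vertices with minimum cut at least `c`. So the number `N n` of such cuts
satisfies `N n ≤ N (n - 1) * n / (n - s)`, and by Gautschi's inequality the product this unrolls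
to is at most `n ^ s`.

Hence the cuts of value `k` fail with total probability at most `n ^ (2 k / c) p ^ k = q ^ k`,
where `q = n ^ (-δ / c)`. Abel summation over `k ≥ α c` bounds the probability that a cut of
value at least `α c` fails by `(1 - p) q ^ ⌈α c⌉ / (1 - q)`, and Bernoulli's inequality for
`p = q ^ (1 + 2 / δ)` gives `(1 - p) / (1 - q) ≤ 1 + 2 / δ`.
-/

open Finset
open scoped Nat

section RealInequalities

lemma one_sub_rpow_div_one_sub_le {x r : ℝ} (hx0 : 0 ≤ x) (hx1 : x < 1) (hr : 1 ≤ r) :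
    (1 - x ^ r) / (1 - x) ≤ r := by
  have := one_add_mul_self_le_rpow_one_add (by linarith : -1 ≤ x - 1) hr
  rw [add_sub_cancel] at this
  rw [div_le_iff₀ (by linarith)]
  linarith

lemma rpow_neg_pow_ceil_le {x a : ℝ} (hx : 1 ≤ x) (ha : 0 ≤ a) (t : ℝ) :
    (x ^ (-a)) ^ ⌈t⌉₊ ≤ x ^ (-(a * t)) := by
  rw [← Real.rpow_natCast, ← Real.rpow_mul (by positivity)]
  refine Real.rpow_le_rpow_of_exponent_le hx ?_
  nlinarith [Nat.le_ceil t]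

/-- Abel summation: `p ^ v = (1 - p) * ∑_{v ≤ k < M} p ^ k + p ^ M`, summed over `𝒜` and
regrouped by `k`. -/
lemma sum_pow_le_of_card_filter_le {ι : Type*} (𝒜 : Finset ι) (v : ι → ℕ) {p q : ℝ} {k₀ : ℕ}
    (hp : 0 ≤ p) (hpq : p ≤ q) (hq : q < 1) (hv : ∀ i ∈ 𝒜, k₀ ≤ v i)
    (hcount : ∀ k, k₀ ≤ k → #{i ∈ 𝒜 | v i ≤ k} * p ^ k ≤ q ^ k) :
    ∑ i ∈ 𝒜, p ^ v i ≤ (1 - p) * q ^ k₀ / (1 - q) := by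
  set M := max k₀ (𝒜.sup v)
  have hvM (i) (hi : i ∈ 𝒜) : v i ≤ M := le_max_of_le_right (le_sup hi)
  have hgeom (x : ℝ) {a : ℕ} (ha : a ≤ M) : x ^ a = (1 - x) * ∑ k ∈ Ico a M, x ^ k + x ^ M := by
    linarith [geom_sum_Ico_mul x ha]
  have hregroup : ∑ i ∈ 𝒜, ∑ k ∈ Ico (v i) M, p ^ k
      = ∑ k ∈ Ico k₀ M, (#{i ∈ 𝒜 | v i ≤ k} : ℝ) * p ^ k := by
    have hIco (i) (hi : i ∈ 𝒜) :
        ∑ k ∈ Ico (v i) M, p ^ k = ∑ k ∈ Ico k₀ M, if v i ≤ k then p ^ k else 0 := by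
      rw [← sum_filter]
      congr 1
      ext k
      have := hv i hi
      simp only [mem_Ico, mem_filter]
      omega
    rw [sum_congr rfl hIco, sum_comm]
    exact sum_congr rfl fun k _ ↦ by rw [← sum_filter, sum_const, nsmul_eq_mul]
  calc ∑ i ∈ 𝒜, p ^ v i
      = (1 - p) * ∑ k ∈ Ico k₀ M, (#{i ∈ 𝒜 | v i ≤ k} : ℝ) * p ^ k + #𝒜 * p ^ M := by
        rw [sum_congr rfl fun i hi ↦ hgeom p (hvM i hi), sum_add_distrib, ← mul_sum, hregroup,
          sum_const, nsmul_eq_mul]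
    _ ≤ (1 - p) * ∑ k ∈ Ico k₀ M, q ^ k + q ^ M := by
        gcongr with k hk
        · linarith
        · exact hcount k (mem_Ico.1 hk).1
        · simpa [filter_true_of_mem hvM] using hcount M (le_max_left _ _)
    _ ≤ (1 - p) * q ^ k₀ / (1 - q) := by
        rw [le_div_iff₀ (by linarith)]
        nlinarith [geom_sum_Ico_mul q (le_max_left k₀ (𝒜.sup v)),
          mul_nonneg (pow_nonneg (hp.trans hpq) M) (sub_nonneg.2 hpq)]

end RealInequalities

section CutCountBound

/-- `2 ^ r * ∏_{k = r + 2}^{n} k / (k - s)` with `r = ⌊s⌋₊`: the bound on the number of cuts of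
value at most `s * c / 2` obtained by contracting edges one at a time down to `r + 1` vertices. -/
noncomputable def cutCountBound (s : ℝ) (n : ℕ) : ℝ :=
  2 ^ ⌊s⌋₊ * ∏ j ∈ range (n - (⌊s⌋₊ + 1)), ((⌊s⌋₊ + 2 + j : ℝ) / (⌊s⌋₊ + 2 + j - s))

lemma floor_add_two_sub_pos (s : ℝ) (j : ℕ) : 0 < (⌊s⌋₊ + 2 + j : ℝ) - s := by
  have := Nat.lt_floor_add_one s
  have : (0 : ℝ) ≤ j := j.cast_nonneg
  linarith

lemma cutCountBound_nonneg (s : ℝ) (n : ℕ) : 0 ≤ cutCountBound s n :=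
  mul_nonneg (by positivity) <|
    prod_nonneg fun j _ ↦ (div_pos (by positivity) (floor_add_two_sub_pos s j)).le

lemma cutCountBound_of_le {s : ℝ} {n : ℕ} (hn : n ≤ ⌊s⌋₊ + 1) :
    cutCountBound s n = 2 ^ ⌊s⌋₊ := by
  simp [cutCountBound, Nat.sub_eq_zero_of_le hn]

lemma cutCountBound_succ {s : ℝ} {n : ℕ} (hn : ⌊s⌋₊ + 1 ≤ n) :
    cutCountBound s (n + 1) = cutCountBound s n * ((n + 1) / (n + 1 - s)) := by
  have hcast : (⌊s⌋₊ + 2 + (n - (⌊s⌋₊ + 1) : ℕ) : ℝ) = n + 1 := by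
    rw [Nat.cast_sub hn]
    push_cast
    ring
  rw [cutCountBound, cutCountBound, Nat.sub_add_comm hn, prod_range_succ, hcast, mul_assoc]

/-- Gautschi's inequality `Γ(N + 1) (N + 1) ^ τ ≤ Γ(N + 1 + τ) / Γ(1 + τ)` in product form. -/
lemma factorial_mul_rpow_le_prod {τ : ℝ} (hτ0 : 0 ≤ τ) (hτ1 : τ ≤ 1) (N : ℕ) :
    (N ! : ℝ) * (N + 1) ^ τ ≤ ∏ j ∈ range N, ((j : ℝ) + 1 + τ) := by
  induction N with
  | zero => simp
  | succ N ih =>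
    have hN : (0 : ℝ) < N + 1 := by positivity
    have hamgm : ((N : ℝ) + 1) ^ (1 - τ) * ((N : ℝ) + 2) ^ τ ≤ N + 1 + τ := by
      have := Real.geom_mean_le_arith_mean2_weighted (sub_nonneg.2 hτ1) hτ0 hN.le
        (by positivity : (0 : ℝ) ≤ N + 2) (by ring)
      linarith
    calc ((N + 1)! : ℝ) * ((N + 1 : ℕ) + 1 : ℝ) ^ τ
        = (N ! * (N + 1) ^ τ) * (((N : ℝ) + 1) ^ (1 - τ) * ((N : ℝ) + 2) ^ τ) := by
          rw [← mul_assoc, mul_assoc (N ! : ℝ), ← Real.rpow_add hN, add_sub_cancel,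
            Real.rpow_one]
          push_cast [Nat.factorial_succ]
          ring_nf
      _ ≤ (∏ j ∈ range N, ((j : ℝ) + 1 + τ)) * (N + 1 + τ) :=
          mul_le_mul ih hamgm (by positivity) (prod_nonneg fun j _ ↦ by positivity)
      _ = ∏ j ∈ range (N + 1), ((j : ℝ) + 1 + τ) := (prod_range_succ _ _).symm

lemma two_pow_mul_prod_le (r N : ℕ) :
    2 ^ r * ∏ j ∈ range N, (r + 2 + j) ≤ (N + 1)! * (N + 1 + r) ^ r := by
  have hfact : (r + 1)! * ∏ j ∈ range N, (r + 2 + j) = (N + 1)! * (N + 1 + 1).ascFactorial r := by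
    rw [← Nat.ascFactorial_eq_prod_range, Nat.factorial_mul_ascFactorial,
      Nat.factorial_mul_ascFactorial]
    ring_nf
  have htwo : 2 ^ r ≤ (r + 1)! := by
    simpa [add_comm] using Nat.factorial_mul_pow_le_factorial (m := 1) (n := r)
  calc 2 ^ r * ∏ j ∈ range N, (r + 2 + j) ≤ (r + 1)! * ∏ j ∈ range N, (r + 2 + j) :=
        Nat.mul_le_mul_right _ htwo
    _ ≤ (N + 1)! * (N + 1 + r) ^ r :=
        hfact ▸ Nat.mul_le_mul_left _ (Nat.ascFactorial_le_pow_add _ _)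

lemma cutCountBound_le_rpow {s : ℝ} (hs : 0 ≤ s) {n : ℕ} (hn : 2 ≤ n) :
    cutCountBound s n ≤ (n : ℝ) ^ s := by
  set r := ⌊s⌋₊
  have hrs : (r : ℝ) ≤ s := Nat.floor_le hs
  have hsr : s < r + 1 := Nat.lt_floor_add_one s
  rcases le_or_gt n (r + 1) with hnr | hnr
  · rw [cutCountBound_of_le hnr, ← Real.rpow_natCast]
    calc (2 : ℝ) ^ (r : ℝ) ≤ 2 ^ s := Real.rpow_le_rpow_of_exponent_le one_le_two hrs
      _ ≤ (n : ℝ) ^ s := Real.rpow_le_rpow zero_le_two (by exact_mod_cast hn) hs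
  obtain ⟨N, rfl⟩ : ∃ N, n = r + 1 + N := ⟨n - (r + 1), by omega⟩
  set τ : ℝ := r + 1 - s
  have hN : (0 : ℝ) < N + 1 := by positivity
  have hnum : (2 : ℝ) ^ r * ∏ j ∈ range N, ((r : ℝ) + 2 + j)
      ≤ ((N + 1)! : ℝ) * (N + 1 + r) ^ r := by
    exact_mod_cast two_pow_mul_prod_le r N
  have hden := factorial_mul_rpow_le_prod (τ := τ) (by linarith) (by linarith) N
  have hn' : ((r + 1 + N : ℕ) : ℝ) = N + 1 + r := by push_cast; ring
  calc cutCountBound s (r + 1 + N)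
      = (2 ^ r * ∏ j ∈ range N, ((r : ℝ) + 2 + j)) / ∏ j ∈ range N, ((j : ℝ) + 1 + τ) := by
        rw [cutCountBound, show r + 1 + N - (r + 1) = N by omega, prod_div_distrib,
          ← mul_div_assoc]
        exact congrArg _ (prod_congr rfl fun j _ ↦ by ring)
    _ ≤ ((N + 1)! : ℝ) * (N + 1 + r) ^ r / (N ! * (N + 1) ^ τ) :=
        div_le_div₀ (by positivity) hnum (by positivity) hden
    _ = ((N : ℝ) + 1) ^ (1 - τ) * (N + 1 + r) ^ r := by
        rw [Real.rpow_sub hN 1 τ, Real.rpow_one, Nat.factorial_succ]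
        push_cast
        field_simp
    _ ≤ ((r + 1 + N : ℕ) : ℝ) ^ (1 - τ) * ((r + 1 + N : ℕ) : ℝ) ^ (r : ℝ) := by
        rw [Real.rpow_natCast, hn']
        exact mul_le_mul_of_nonneg_right
          (Real.rpow_le_rpow hN.le (by linarith) (by linarith)) (by positivity)
    _ = ((r + 1 + N : ℕ) : ℝ) ^ s := by
        rw [← Real.rpow_add (by positivity)]
        congr 1
        ring

end CutCountBound

section Cuts

variable {V E : Type}

lemma crosses_compl [Fintype V] [DecidableEq V] (ends : E → Sym2 V) (A : Finset V) (e : E) :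
    crosses ends Aᶜ e ↔ crosses ends A e := by
  simp only [crosses, mem_compl, not_not]
  exact and_comm

lemma cutEdges_compl [Fintype V] [DecidableEq V] [Fintype E] (ends : E → Sym2 V)
    (A : Finset V) : cutEdges ends Aᶜ = cutEdges ends A :=
  filter_congr fun e _ ↦ crosses_compl ends A e

lemma cutValue_compl [Fintype V] [DecidableEq V] [Fintype E] (ends : E → Sym2 V)
    (A : Finset V) : cutValue ends Aᶜ = cutValue ends A := by
  rw [cutValue, cutEdges_compl, cutValue]

lemma mem_iff_mem_of_not_crosses {ends : E → Sym2 V} {A : Finset V} {e : E} {a b : V}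
    (he : ends e = s(a, b)) (h : ¬ crosses ends A e) : a ∈ A ↔ b ∈ A := by
  simp only [crosses, he, Sym2.mem_iff, exists_eq_or_imp, exists_eq_left, not_and_or] at h
  tauto

lemma cutValue_le_card [Fintype E] (ends : E → Sym2 V) (A : Finset V) :
    cutValue ends A ≤ Fintype.card E :=
  card_le_univ _

lemma card_filter_not_crosses [Fintype E] (ends : E → Sym2 V) (A : Finset V) :
    #{e | ¬ crosses ends A e} = Fintype.card E - cutValue ends A := by
  have := card_filter_add_card_filter_not (s := univ) (crosses ends A)
  rw [card_univ] at this
  rw [cutValue, cutEdges]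
  omega

lemma card_mul_le_two_mul_card [Fintype V] [DecidableEq V] [Fintype E] {ends : E → Sym2 V}
    {c : ℕ} (hn : 2 ≤ Fintype.card V)
    (hmin : ∀ A : Finset V, A.Nonempty → Aᶜ.Nonempty → c ≤ cutValue ends A) :
    Fintype.card V * c ≤ 2 * Fintype.card E := by
  have hdeg (v : V) : c ≤ cutValue ends {v} := by
    obtain ⟨w, hw⟩ := Fintype.exists_ne_of_one_lt_card hn v
    exact hmin _ (singleton_nonempty v) ⟨w, by simpa using hw⟩
  have hends (e : E) : #{v | crosses ends {v} e} ≤ 2 := by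
    obtain ⟨⟨x, y⟩, hxy⟩ := Quot.exists_rep (ends e)
    refine (card_le_card (t := {x, y}) fun v hv ↦ ?_).trans card_le_two
    obtain ⟨⟨u, hu, huv⟩, -⟩ := (mem_filter.1 hv).2
    rw [← hxy] at hu
    rw [mem_singleton] at huv
    simpa [huv] using hu
  calc Fintype.card V * c = ∑ _v : V, c := by simp [mul_comm]
    _ ≤ ∑ v : V, cutValue ends {v} := sum_le_sum fun v _ ↦ hdeg v
    _ = ∑ e : E, #{v | crosses ends {v} e} :=
        sum_card_bipartiteAbove_eq_sum_card_bipartiteBelow (fun v e ↦ crosses ends {v} e)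
    _ ≤ ∑ _e : E, 2 := sum_le_sum fun e _ ↦ hends e
    _ = 2 * Fintype.card E := by simp [mul_comm]

lemma exists_eq_mk_of_not_isDiag {z : Sym2 V} (hz : ¬ z.IsDiag) : ∃ a b, a ≠ b ∧ z = s(a, b) :=
  Sym2.ind (fun a b hz ↦ ⟨a, b, by rwa [Sym2.mk_isDiag_iff] at hz, rfl⟩) z hz

end Cuts

section Contraction

variable {V W E : Type}

/-- Vertices with the same image under `f` are identified; the edges that would become loops are
deleted. -/
def contract (ends : E → Sym2 V) (f : V → W) : {e : E // ¬ ((ends e).map f).IsDiag} → Sym2 W :=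
  fun e ↦ (ends e.1).map f

section Pullback

variable [Fintype V] [DecidableEq W]

lemma crosses_contract_iff (ends : E → Sym2 V) (f : V → W) (A : Finset W) (e) :
    crosses (contract ends f) A e ↔ crosses ends {x | f x ∈ A} e.1 := by
  simp [crosses, contract, Sym2.mem_map]

lemma not_isDiag_map_of_crosses {ends : E → Sym2 V} {f : V → W} {A : Finset W} {e : E}
    (h : crosses ends {x | f x ∈ A} e) : ¬ ((ends e).map f).IsDiag := by
  obtain ⟨⟨x, hx, hxA⟩, ⟨y, hy, hyA⟩⟩ := h
  simp only [mem_filter, mem_univ, true_and] at hxA hyA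
  have hne : f x ≠ f y := fun h ↦ hyA (h ▸ hxA)
  generalize ends e = z at hx hy
  induction z using Sym2.ind
  rw [Sym2.mem_iff] at hx hy
  rcases hx with rfl | rfl <;> rcases hy with rfl | rfl <;> simp_all [eq_comm]

lemma cutValue_contract [Fintype E] (ends : E → Sym2 V) (f : V → W) (A : Finset W) :
    cutValue (contract ends f) A = cutValue ends {x | f x ∈ A} := by
  have hsub : cutEdges (contract ends f) A = (cutEdges ends {x | f x ∈ A}).subtype _ := by
    ext e
    simp [cutEdges, crosses_contract_iff]
  rw [cutValue, cutValue, hsub, card_subtype, filter_true_of_mem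
    (s := cutEdges ends {x | f x ∈ A}) fun e he ↦ not_isDiag_map_of_crosses (mem_filter.1 he).2]

lemma le_cutValue_contract [DecidableEq V] [Fintype W] [Fintype E] {ends : E → Sym2 V}
    {f : V → W} (hf : Function.Surjective f) {c : ℕ}
    (hmin : ∀ A : Finset V, A.Nonempty → Aᶜ.Nonempty → c ≤ cutValue ends A)
    (A : Finset W) (hA : A.Nonempty) (hAc : Aᶜ.Nonempty) : c ≤ cutValue (contract ends f) A := by
  obtain ⟨_, hx⟩ := hA
  obtain ⟨x, rfl⟩ := hf ‹_›
  obtain ⟨_, hy⟩ := hAc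
  obtain ⟨y, rfl⟩ := hf ‹_›
  rw [cutValue_contract]
  exact hmin _ ⟨x, by simpa using hx⟩ ⟨y, by simpa using hy⟩

end Pullback

section MergeVertex

variable [DecidableEq V] {a b : V}

def mergeVertex (hab : a ≠ b) (x : V) : {x : V // x ≠ b} :=
  if h : x = b then ⟨a, hab⟩ else ⟨x, h⟩

variable (hab : a ≠ b)

lemma coe_mergeVertex (x : V) : (mergeVertex hab x : V) = if x = b then a else x := by
  unfold mergeVertex
  split_ifs <;> rfl

lemma mergeVertex_surjective : Function.Surjective (mergeVertex hab) :=
  fun y ↦ ⟨y, dif_neg y.2⟩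

lemma filter_mergeVertex_mem_subtype [Fintype V] {A : Finset V} (h : a ∈ A ↔ b ∈ A) :
    ({x | mergeVertex hab x ∈ A.subtype (· ≠ b)} : Finset V) = A := by
  ext x
  simp only [mem_filter, mem_univ, true_and, mem_subtype, coe_mergeVertex]
  split_ifs with hx
  · exact hx ▸ h
  · rfl

end MergeVertex

end Contraction

section Counting

variable {V E : Type} [Fintype V] [DecidableEq V] [Fintype E]

/-- The cuts `(A, Aᶜ)` of value at most `t`, each counted once by putting `v` on the side `A`. -/
noncomputable def cutsThrough (ends : E → Sym2 V) (v : V) (t : ℝ) : Finset (Finset V) :=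
  {A | v ∈ A ∧ Aᶜ.Nonempty ∧ (cutValue ends A : ℝ) ≤ t}

lemma card_cutsThrough_le_two_pow (ends : E → Sym2 V) (v : V) (t : ℝ) :
    #(cutsThrough ends v t) ≤ 2 ^ (Fintype.card V - 1) := by
  calc #(cutsThrough ends v t) ≤ #((univ.erase v).powerset.image (insert v)) := by
        refine card_le_card fun A hA ↦ mem_image.2 ⟨A.erase v, ?_, insert_erase ?_⟩
        · exact mem_powerset.2 (erase_subset_erase v (subset_univ A))
        · exact (mem_filter.1 hA).2.1
    _ ≤ 2 ^ (Fintype.card V - 1) := by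
        simpa [card_erase_of_mem] using card_image_le (s := (univ.erase v).powerset)

lemma card_cutsThrough_not_crosses_le {ends : E → Sym2 V} {e : E} {a b : V} (hab : a ≠ b)
    (he : ends e = s(a, b)) (v : V) (t : ℝ) :
    #{A ∈ cutsThrough ends v t | ¬ crosses ends A e}
      ≤ #(cutsThrough (contract ends (mergeVertex hab)) (mergeVertex hab v) t) := by
  have hsat {A : Finset V} (hA : A ∈ {A ∈ cutsThrough ends v t | ¬ crosses ends A e}) :=
    filter_mergeVertex_mem_subtype hab (mem_iff_mem_of_not_crosses he (mem_filter.1 hA).2)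
  refine card_le_card_of_injOn (·.subtype (· ≠ b)) (fun A hA ↦ ?_) fun A₁ hA₁ A₂ hA₂ h ↦ ?_
  · have hA' := hsat hA
    obtain ⟨hA₀, -⟩ := mem_filter.1 hA
    obtain ⟨hvA, ⟨w, hw⟩, hval⟩ := (mem_filter.1 hA₀).2
    rw [← hA'] at hvA hw hval
    simp only [cutsThrough, coe_filter, mem_univ, true_and, Set.mem_ofPred_eq]
    refine ⟨by simpa using hvA, ⟨mergeVertex hab w, by simpa using hw⟩, ?_⟩
    rwa [cutValue_contract]
  · rw [← hsat hA₁, ← hsat hA₂]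
    simp only at h
    rw [h]

lemma card_cutsThrough_mul_le (ends : E → Sym2 V) (v : V) (t : ℝ) {B : ℝ}
    (hB : ∀ e, (#{A ∈ cutsThrough ends v t | ¬ crosses ends A e} : ℝ) ≤ B) :
    #(cutsThrough ends v t) * (Fintype.card E - t) ≤ Fintype.card E * B := by
  have hA {A} (hA : A ∈ cutsThrough ends v t) :
      Fintype.card E - t ≤ (#{e | ¬ crosses ends A e} : ℝ) := by
    have hval : (cutValue ends A : ℝ) ≤ t := (mem_filter.1 hA).2.2.2
    rw [card_filter_not_crosses, Nat.cast_sub (cutValue_le_card ends A)]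
    linarith
  calc #(cutsThrough ends v t) * (Fintype.card E - t)
      ≤ ∑ A ∈ cutsThrough ends v t, (#{e | ¬ crosses ends A e} : ℝ) := by
        rw [← nsmul_eq_mul, ← sum_const]
        exact sum_le_sum fun A hA' ↦ hA hA'
    _ = ∑ e : E, (#{A ∈ cutsThrough ends v t | ¬ crosses ends A e} : ℝ) := by
        exact_mod_cast sum_card_bipartiteAbove_eq_sum_card_bipartiteBelow
          (fun A e ↦ ¬ crosses ends A e)
    _ ≤ Fintype.card E * B := by
        simpa using sum_le_sum fun e (_ : e ∈ univ) ↦ hB e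

lemma card_cutsThrough_le_cutCountBound_of_le (ends : E → Sym2 V) (v : V) (t : ℝ) {s : ℝ}
    {n : ℕ} (hV : Fintype.card V = n) (hn : n ≤ ⌊s⌋₊ + 1) :
    (#(cutsThrough ends v t) : ℝ) ≤ cutCountBound s n := by
  rw [cutCountBound_of_le hn]
  exact_mod_cast (card_cutsThrough_le_two_pow ends v t).trans
    (Nat.pow_le_pow_right two_pos (by omega))

theorem card_cutsThrough_le_cutCountBound {ends : E → Sym2 V} (hnd : ∀ e, ¬ (ends e).IsDiag)
    {c : ℕ} (hc : 1 ≤ c) (hmin : ∀ A : Finset V, A.Nonempty → Aᶜ.Nonempty → c ≤ cutValue ends A)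
    (v : V) {s : ℝ} (hs : 0 ≤ s) :
    (#(cutsThrough ends v (s * c / 2)) : ℝ) ≤ cutCountBound s (Fintype.card V) := by
  obtain ⟨n, hn⟩ : ∃ n, Fintype.card V = n := ⟨_, rfl⟩
  rw [hn]
  induction n generalizing V E with
  | zero => exact card_cutsThrough_le_cutCountBound_of_le ends v _ hn (by omega)
  | succ n ih =>
    rcases le_or_gt (n + 1) (⌊s⌋₊ + 1) with hnr | hnr
    · exact card_cutsThrough_le_cutCountBound_of_le ends v _ hn hnr
    have hB (e : E) :
        (#{A ∈ cutsThrough ends v (s * c / 2) | ¬ crosses ends A e} : ℝ) ≤ cutCountBound s n := by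
      obtain ⟨a, b, hab, he⟩ := exists_eq_mk_of_not_isDiag (hnd e)
      refine (Nat.cast_le.2 (card_cutsThrough_not_crosses_le hab he v _)).trans ?_
      exact ih (fun e ↦ e.2) (le_cutValue_contract (mergeVertex_surjective hab) hmin) _
        (by simp [hn])
    have hcount := card_cutsThrough_mul_le ends v _ hB
    have hedges : ((n + 1 : ℕ) : ℝ) * c ≤ 2 * Fintype.card E := by
      exact_mod_cast hn ▸ card_mul_le_two_mul_card (by omega) hmin
    have hsn : s < n + 1 := by
      have := Nat.lt_floor_add_one s
      have : (⌊s⌋₊ : ℝ) + 1 ≤ n := by exact_mod_cast Nat.lt_succ_iff.1 hnr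
      linarith
    have hc' : (1 : ℝ) ≤ c := by exact_mod_cast hc
    push_cast at hedges
    have hD : 0 < Fintype.card E - s * c / 2 := by nlinarith
    rw [cutCountBound_succ (by omega), mul_div_assoc', le_div_iff₀ (by linarith)]
    refine le_of_mul_le_mul_right ?_ hD
    nlinarith [mul_le_mul_of_nonneg_right hcount (by linarith : (0 : ℝ) ≤ n + 1 - s),
      mul_nonneg (mul_nonneg (cutCountBound_nonneg s n) hs)
        (by linarith : (0 : ℝ) ≤ 2 * Fintype.card E - (n + 1) * c)]

theorem card_cutsThrough_le_rpow {ends : E → Sym2 V} (hnd : ∀ e, ¬ (ends e).IsDiag) {c : ℕ}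
    (hc : 1 ≤ c) (hmin : ∀ A : Finset V, A.Nonempty → Aᶜ.Nonempty → c ≤ cutValue ends A)
    (hn : 2 ≤ Fintype.card V) (v : V) {t : ℝ} (ht : 0 ≤ t) :
    (#(cutsThrough ends v t) : ℝ) ≤ (Fintype.card V : ℝ) ^ (2 * t / c) := by
  have hc0 : (0 : ℝ) < c := by exact_mod_cast hc
  have h := card_cutsThrough_le_cutCountBound hnd hc hmin v (s := 2 * t / c) (by positivity)
  rw [show 2 * t / c * c / 2 = t by field_simp] at h
  exact h.trans (cutCountBound_le_rpow (by positivity) hn)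

end Counting

section Probability

variable {E : Type} {ι : Type*} [Fintype E]

lemma failurePr_supersets (p : ℝ) (B : Finset E) : failurePr p {F | B ⊆ F} = p ^ #B := by
  have hprod : ∏ e : E, (p + if e ∉ B then 1 - p else 0) = p ^ #B := by
    calc ∏ e : E, (p + if e ∉ B then 1 - p else 0) = ∏ e : E, if e ∈ B then p else 1 :=
          prod_congr rfl fun e _ ↦ by split_ifs <;> ring
      _ = p ^ #B := by rw [Fintype.prod_ite_mem, prod_const]
  rw [failurePr, sum_filter, ← hprod, prod_add, powerset_univ]
  refine sum_congr rfl fun F _ ↦ ?_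
  rw [prod_const, ← compl_eq_univ_sdiff, prod_ite_zero, prod_const, card_compl]
  have hsub : (∀ e ∈ Fᶜ, e ∉ B) ↔ B ⊆ F := by
    simp only [mem_compl, subset_iff]
    exact forall_congr' fun e ↦ not_imp_not
  simp only [hsub, mul_ite, mul_zero]

lemma failurePr_le_sum_pow_card {p : ℝ} (hp0 : 0 ≤ p) (hp1 : p ≤ 1) (S : Finset (Finset E))
    (𝒜 : Finset ι) (B : ι → Finset E) (hS : ∀ F ∈ S, ∃ i ∈ 𝒜, B i ⊆ F) :
    failurePr p S ≤ ∑ i ∈ 𝒜, p ^ #(B i) := by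
  set w : Finset E → ℝ := fun F ↦ p ^ #F * (1 - p) ^ (Fintype.card E - #F)
  have hw (F : Finset E) (i : ι) : 0 ≤ if B i ⊆ F then w F else 0 := by
    split_ifs
    · exact mul_nonneg (pow_nonneg hp0 _) (pow_nonneg (by linarith) _)
    · exact le_rfl
  calc failurePr p S ≤ ∑ F ∈ S, ∑ i ∈ 𝒜, if B i ⊆ F then w F else 0 := by
        refine sum_le_sum fun F hF ↦ ?_
        obtain ⟨i, hi, hBi⟩ := hS F hF
        exact (if_pos hBi).symm.trans_le
          (single_le_sum (f := fun j ↦ if B j ⊆ F then w F else 0) (fun j _ ↦ hw F j) hi)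
    _ ≤ ∑ F, ∑ i ∈ 𝒜, if B i ⊆ F then w F else 0 :=
        sum_le_sum_of_subset_of_nonneg (subset_univ S) fun F _ _ ↦ sum_nonneg fun i _ ↦ hw F i
    _ = ∑ i ∈ 𝒜, p ^ #(B i) := by
        rw [sum_comm]
        exact sum_congr rfl fun i _ ↦ by rw [← sum_filter, ← failurePr_supersets]; rfl

end Probability

section FailureOfHeavyCuts

variable {V E : Type} [Fintype V] [DecidableEq V] [Fintype E]

lemma failurePr_exists_cut_le_sum (ends : E → Sym2 V) (v : V) {p : ℝ} (hp0 : 0 ≤ p)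
    (hp1 : p ≤ 1) (T : ℝ) :
    failurePr p {F | ∃ A : Finset V, A.Nonempty ∧ Aᶜ.Nonempty ∧
        T ≤ (cutValue ends A : ℝ) ∧ cutEdges ends A ⊆ F}
      ≤ ∑ A ∈ {A : Finset V | v ∈ A ∧ Aᶜ.Nonempty ∧ T ≤ (cutValue ends A : ℝ)},
        p ^ cutValue ends A := by
  refine failurePr_le_sum_pow_card hp0 hp1 _ _ (cutEdges ends) fun F hF ↦ ?_
  obtain ⟨A, hA, hAc, hT, hAF⟩ := (mem_filter.1 hF).2
  by_cases hv : v ∈ A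
  · exact ⟨A, by simp [hv, hAc, hT], hAF⟩
  · refine ⟨Aᶜ, ?_, by rwa [cutEdges_compl]⟩
    simpa [hv, cutValue_compl, hA] using hT

theorem failurePr_exists_cut_le {ends : E → Sym2 V} (hnd : ∀ e, ¬ (ends e).IsDiag) {c : ℕ}
    (hc : 1 ≤ c) (hmin : ∀ A : Finset V, A.Nonempty → Aᶜ.Nonempty → c ≤ cutValue ends A)
    (hn : 2 ≤ Fintype.card V) {p : ℝ} (hp0 : 0 ≤ p)
    (hq : (Fintype.card V : ℝ) ^ (2 / c : ℝ) * p < 1) (T : ℝ) :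
    failurePr p {F | ∃ A : Finset V, A.Nonempty ∧ Aᶜ.Nonempty ∧
        T ≤ (cutValue ends A : ℝ) ∧ cutEdges ends A ⊆ F}
      ≤ (1 - p) * ((Fintype.card V : ℝ) ^ (2 / c : ℝ) * p) ^ ⌈T⌉₊
        / (1 - (Fintype.card V : ℝ) ^ (2 / c : ℝ) * p) := by
  obtain ⟨v⟩ : Nonempty V := Fintype.card_pos_iff.1 (by omega)
  have hn1 : (1 : ℝ) ≤ Fintype.card V := by exact_mod_cast (by omega : 1 ≤ Fintype.card V)
  have hpq : p ≤ (Fintype.card V : ℝ) ^ (2 / c : ℝ) * p :=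
    le_mul_of_one_le_left hp0 (Real.one_le_rpow hn1 (by positivity))
  refine (failurePr_exists_cut_le_sum ends v hp0 (hpq.trans hq.le) T).trans
    (sum_pow_le_of_card_filter_le _ _ hp0 hpq hq
      (fun A hA ↦ Nat.ceil_le.2 (mem_filter.1 hA).2.2.2) fun k _ ↦ ?_)
  rw [mul_pow, ← Real.rpow_natCast ((Fintype.card V : ℝ) ^ (2 / c : ℝ)) k,
    ← Real.rpow_mul (by positivity)]
  gcongr
  refine le_trans ?_ ((card_cutsThrough_le_rpow hnd hc hmin hn v (Nat.cast_nonneg k)).trans_eq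
    (by ring_nf))
  refine Nat.cast_le.2 (card_le_card fun A hA ↦ ?_)
  simp only [cutsThrough, mem_filter, mem_univ, true_and] at hA ⊢
  exact ⟨hA.1.1, hA.1.2.1, by exact_mod_cast hA.2⟩

end FailureOfHeavyCuts

theorem stmt2_general {V E : Type} [Fintype V] [DecidableEq V] [Fintype E]
    (ends : E → Sym2 V) (hnd : ∀ e, ¬ (ends e).IsDiag)
    (hn : 2 ≤ Fintype.card V) (c : ℕ) (hc : 1 ≤ c)
    (hmin : ∀ A : Finset V, A.Nonempty → Aᶜ.Nonempty → c ≤ cutValue ends A)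
    (p δ : ℝ) (hp0 : 0 ≤ p) (hδ : 0 < δ)
    (hpc : p ^ c = (Fintype.card V : ℝ) ^ (-(2 + δ)))
    (α : ℝ) :
    failurePr p (Finset.univ.filter (fun F : Finset E =>
        ∃ A : Finset V, A.Nonempty ∧ Aᶜ.Nonempty ∧
          α * c ≤ (cutValue ends A : ℝ) ∧ cutEdges ends A ⊆ F))
      ≤ (Fintype.card V : ℝ) ^ (-(α * δ)) * (1 + 2 / δ) := by
  have hn1 : (1 : ℝ) < Fintype.card V := by exact_mod_cast hn
  set n : ℝ := (Fintype.card V : ℝ)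
  have hp : p = n ^ (-(2 + δ) / c) := by
    rw [← Real.pow_rpow_inv_natCast hp0 (by omega : c ≠ 0), hpc, ← Real.rpow_mul (by positivity)]
    ring_nf
  have hq : n ^ (2 / c : ℝ) * p = n ^ (-(δ / c)) := by
    rw [hp, ← Real.rpow_add (by positivity)]
    ring_nf
  have hpq : p = (n ^ (-(δ / c))) ^ (1 + 2 / δ) := by
    rw [hp, ← Real.rpow_mul (by positivity)]
    field_simp
    ring_nf
  have hq1 : n ^ (-(δ / c)) < 1 :=
    Real.rpow_lt_one_of_one_lt_of_neg hn1 (neg_neg_of_pos (by positivity))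
  calc _ ≤ (1 - p) * (n ^ (-(δ / c))) ^ ⌈α * c⌉₊ / (1 - n ^ (-(δ / c))) :=
        hq ▸ failurePr_exists_cut_le hnd hc hmin hn hp0 (hq ▸ hq1) (α * c)
    _ ≤ (1 + 2 / δ) * (n ^ (-(δ / c))) ^ ⌈α * c⌉₊ := by
        rw [mul_div_right_comm, hpq]
        gcongr
        exact one_sub_rpow_div_one_sub_le (by positivity) hq1
          (le_add_of_nonneg_right (by positivity))
    _ ≤ n ^ (-(α * δ)) * (1 + 2 / δ) := by
        rw [mul_comm]
        gcongr
        exact (rpow_neg_pow_ceil_le hn1.le (by positivity) (α * c)).trans_eq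
          (by congr 2; field_simp)

/-- If a multigraph on `n ≥ 2` vertices has minimum cut value `c ≥ 1` and each
edge fails independently with probability `p ∈ [0,1]` where `p ^ c = n ^ (-(2 + δ))` for some
`δ > 0`, then for every real `α ≥ 1` the probability that some cut of value at least `α * c`
fails (i.e. all edges of its edge set fail) is at most `n ^ (-(α * δ)) * (1 + 2 / δ)`. -/
theorem stmt2 {V E : Type} [Fintype V] [DecidableEq V] [Fintype E]
    (ends : E → Sym2 V) (hnd : ∀ e, ¬ (ends e).IsDiag)
    (hn : 2 ≤ Fintype.card V) (c : ℕ) (hc : 1 ≤ c)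
    (hmin : ∀ A : Finset V, A.Nonempty → Aᶜ.Nonempty → c ≤ cutValue ends A)
    (hex : ∃ A : Finset V, A.Nonempty ∧ Aᶜ.Nonempty ∧ cutValue ends A = c)
    (p δ : ℝ) (hp0 : 0 ≤ p) (hp1 : p ≤ 1) (hδ : 0 < δ)
    (hpc : p ^ c = (Fintype.card V : ℝ) ^ (-(2 + δ)))
    (α : ℝ) (hα : 1 ≤ α) :
    failurePr p (Finset.univ.filter (fun F : Finset E =>
        ∃ A : Finset V, A.Nonempty ∧ Aᶜ.Nonempty ∧
          α * c ≤ (cutValue ends A : ℝ) ∧ cutEdges ends A ⊆ F))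
      ≤ (Fintype.card V : ℝ) ^ (-(α * δ)) * (1 + 2 / δ) :=
  stmt2_general ends hnd hn c hc hmin p δ hp0 hδ hpc α
end

section
/- Let α ≥ 1 be a real number, let k = ⌈2α⌉, and let n ≥ k be an integer. Then 2^{1−k} · ∏_{r=k+1}^{n} (1 − 2α/r) > n^{−2α}. -/
/-!
Put `β = 2α`, `k = ⌈β⌉` and `θ = k - β ∈ [0, 1)`. Since `β = θ (k - 1) + (1 - θ) k` and each
factor `1 - c / r` is affine in `c`, weighted AM-GM bounds the product at `β` below by the
weighted geometric mean of the products at `k - 1` and at `k`. These telescope to ratios of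
falling factorials, `∏_{r=k+1}^{n} (1 - c / r) = k^{(c)} / n^{(c)}`, so they are at least
`k! / n^(k-1)` and (strictly, as `k ≥ 2`) more than `k! / n^k`; the geometric mean of these two
bounds is `k! n^(-β)`, and `2^(k-1) ≤ k!` absorbs the factor `2^(1-k)`.
-/

open Finset Nat

theorem Finset.prod_rpow_mul_prod_rpow_le_prod_add {ι : Type*} (s : Finset ι) {f g : ι → ℝ}
    {θ : ℝ} (hθ₀ : 0 ≤ θ) (hθ₁ : θ ≤ 1) (hf : ∀ i ∈ s, 0 ≤ f i) (hg : ∀ i ∈ s, 0 ≤ g i) :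
    (∏ i ∈ s, f i) ^ θ * (∏ i ∈ s, g i) ^ (1 - θ) ≤ ∏ i ∈ s, (θ * f i + (1 - θ) * g i) := by
  rw [← Real.finsetProd_rpow s f hf, ← Real.finsetProd_rpow s g hg, ← prod_mul_distrib]
  exact prod_le_prod (fun i hi => by have := hf i hi; have := hg i hi; positivity)
    fun i hi => Real.geom_mean_le_arith_mean2_weighted hθ₀ (by linarith) (hf i hi) (hg i hi)
      (by ring)

theorem one_sub_div_natCast_nonneg {a : ℝ} {r : ℕ} (h : a ≤ r) : 0 ≤ 1 - a / r :=
  sub_nonneg.2 (div_le_one_of_le₀ h r.cast_nonneg)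

theorem prod_one_sub_div_rpow_mul_rpow_le {s : Finset ℕ} {a b θ : ℝ} (hθ₀ : 0 ≤ θ) (hθ₁ : θ ≤ 1)
    (ha : ∀ r ∈ s, a ≤ r) (hb : ∀ r ∈ s, b ≤ r) :
    (∏ r ∈ s, (1 - a / r)) ^ θ * (∏ r ∈ s, (1 - b / r)) ^ (1 - θ) ≤
      ∏ r ∈ s, (1 - (θ * a + (1 - θ) * b) / r) := by
  refine (s.prod_rpow_mul_prod_rpow_le_prod_add hθ₀ hθ₁ (fun r hr => ?_) (fun r hr => ?_)).trans_eq
    (prod_congr rfl fun r _ => by ring)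
  exacts [one_sub_div_natCast_nonneg (ha r hr), one_sub_div_natCast_nonneg (hb r hr)]

theorem prod_Icc_one_sub_div_eq_descFactorial_div {c k n : ℕ} (hc : c ≤ k) (hk : k ≤ n) :
    ∏ r ∈ Icc (k + 1) n, (1 - c / r : ℝ) = k.descFactorial c / n.descFactorial c := by
  induction n, hk using Nat.le_induction with
  | base =>
    rw [Icc_eq_empty (by omega), prod_empty, div_self]
    exact_mod_cast (descFactorial_pos.2 hc).ne'
  | succ n hkn ih =>
    have hcn : c < n + 1 := by omega
    have hstep : ((n + 1).descFactorial c : ℝ) = (n + 1) * n.descFactorial c / (n + 1 - c) := by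
      rw [eq_div_iff (by linarith [(by exact_mod_cast hcn : (c : ℝ) < n + 1)]), mul_comm]
      have := congrArg (Nat.cast (R := ℝ)) (succ_descFactorial n c)
      push_cast [Nat.cast_sub hcn.le] at this
      linarith
    have : (0 : ℝ) < n.descFactorial c := by exact_mod_cast descFactorial_pos.2 (by omega)
    rw [prod_Icc_succ_top (by omega), ih, hstep]
    field_simp
    push_cast
    ring

theorem factorial_div_pow_mul_le_prod_Icc_one_sub_pred_div {k n : ℕ} (hk : 1 ≤ k) (hkn : k ≤ n) :
    (k ! / n ^ k * n : ℝ) ≤ ∏ r ∈ Icc (k + 1) n, (1 - (k - 1) / r : ℝ) := by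
  have hdesc : k.descFactorial (k - 1) = k ! := by
    simpa [Nat.sub_sub_self hk] using factorial_mul_descFactorial (Nat.sub_le k 1)
  have hn : (0 : ℝ) < n := by exact_mod_cast (by omega : 0 < n)
  have hpow : (n : ℝ) ^ k = n ^ (k - 1) * n := by rw [← pow_succ, Nat.sub_add_cancel hk]
  rw [← Nat.cast_pred hk, prod_Icc_one_sub_div_eq_descFactorial_div (Nat.sub_le k 1) hkn, hpow,
    div_mul_eq_div_div, div_mul_cancel₀ _ hn.ne', hdesc]
  gcongr
  · exact_mod_cast descFactorial_pos.2 (by omega)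
  · exact_mod_cast descFactorial_le_pow n (k - 1)

theorem factorial_div_pow_lt_prod_Icc_one_sub_div {k n : ℕ} (hk : 2 ≤ k) (hkn : k ≤ n) :
    (k ! / n ^ k : ℝ) < ∏ r ∈ Icc (k + 1) n, (1 - k / r : ℝ) := by
  rw [prod_Icc_one_sub_div_eq_descFactorial_div le_rfl hkn, descFactorial_self]
  gcongr
  · exact_mod_cast descFactorial_pos.2 hkn
  · exact_mod_cast descFactorial_lt_pow (by omega) hk

theorem Real.mul_rpow_mul_rpow_one_sub {B : ℝ} (hB : 0 < B) {x : ℝ} (hx : 0 ≤ x) (θ : ℝ) :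
    (B * x) ^ θ * B ^ (1 - θ) = B * x ^ θ := by
  rw [Real.mul_rpow hB.le hx, mul_right_comm, ← Real.rpow_add hB, add_sub_cancel,
    Real.rpow_one]

theorem factorial_mul_rpow_sub_lt_prod_Icc_one_sub_div {k n : ℕ} (hk : 2 ≤ k) (hkn : k ≤ n)
    {θ : ℝ} (hθ₀ : 0 ≤ θ) (hθ₁ : θ < 1) :
    k ! * (n : ℝ) ^ (θ - k) < ∏ r ∈ Icc (k + 1) n, (1 - (k - θ) / r) := by
  have hn : (0 : ℝ) < n := by exact_mod_cast (by omega : 0 < n)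
  have hB : (0 : ℝ) < k ! / n ^ k := by positivity
  have hmem : ∀ r ∈ Icc (k + 1) n, (k : ℝ) ≤ r := fun r hr => by
    have := (mem_Icc.1 hr).1
    exact_mod_cast (by omega : k ≤ r)
  calc k ! * (n : ℝ) ^ (θ - k) = (k ! / n ^ k * n) ^ θ * (k ! / n ^ k) ^ (1 - θ) := by
        rw [Real.mul_rpow_mul_rpow_one_sub hB hn.le, Real.rpow_sub hn, Real.rpow_natCast]; ring
    _ < (∏ r ∈ Icc (k + 1) n, (1 - (k - 1) / r : ℝ)) ^ θ *
          (∏ r ∈ Icc (k + 1) n, (1 - k / r : ℝ)) ^ (1 - θ) := by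
        refine mul_lt_mul_of_le_of_lt_of_pos_of_nonneg
          (Real.rpow_le_rpow (by positivity)
            (factorial_div_pow_mul_le_prod_Icc_one_sub_pred_div (by omega) hkn) hθ₀)
          (Real.rpow_lt_rpow hB.le (factorial_div_pow_lt_prod_Icc_one_sub_div hk hkn)
            (by linarith))
          (by positivity)
          (Real.rpow_nonneg (prod_nonneg fun r hr => one_sub_div_natCast_nonneg (hmem r hr)) _)
    _ ≤ ∏ r ∈ Icc (k + 1) n, (1 - (θ * (k - 1) + (1 - θ) * k) / r) :=
        prod_one_sub_div_rpow_mul_rpow_le hθ₀ hθ₁.le (fun r hr => by linarith [hmem r hr]) hmem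
    _ = ∏ r ∈ Icc (k + 1) n, (1 - (k - θ) / r) := prod_congr rfl fun r _ => by ring

theorem two_pow_pred_le_factorial (k : ℕ) : 2 ^ (k - 1) ≤ k ! := by
  rcases k with _ | k
  · simp
  · simpa [add_comm] using factorial_mul_pow_le_factorial (m := 1) (n := k)

/-- For every real `α ≥ 1`, with `k = ⌈2α⌉`, and every integer `n ≥ k`,
`2 ^ (1 - k) * ∏_{r = k+1}^{n} (1 - 2α/r) > n ^ (-2α)`. -/
theorem stmt5 (α : ℝ) (hα : 1 ≤ α) (n : ℕ) (hn : ⌈2 * α⌉₊ ≤ n) :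
    (2 : ℝ) ^ ((1 : ℤ) - (⌈2 * α⌉₊ : ℤ)) *
        ∏ r ∈ Finset.Icc (⌈2 * α⌉₊ + 1) n, (1 - 2 * α / (r : ℝ))
      > (n : ℝ) ^ (-(2 * α)) := by
  set k := ⌈2 * α⌉₊
  have hk : 2 ≤ k := Nat.lt_ceil.2 (by push_cast; linarith)
  have hθ₁ : (k : ℝ) - 2 * α < 1 := by
    linarith [Nat.ceil_lt_add_one (by linarith : 0 ≤ 2 * α)]
  have hcore := factorial_mul_rpow_sub_lt_prod_Icc_one_sub_div hk hn
    (sub_nonneg.2 (Nat.le_ceil (2 * α))) hθ₁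
  rw [sub_sub_cancel, sub_sub_cancel_left] at hcore
  have h2k : (1 : ℝ) ≤ 2 ^ ((1 : ℤ) - k) * k ! := by
    rw [show (1 : ℤ) - k = -((k - 1 : ℕ) : ℤ) by omega, zpow_neg, zpow_natCast, inv_mul_eq_div,
      one_le_div (by positivity)]
    exact_mod_cast two_pow_pred_le_factorial k
  calc (n : ℝ) ^ (-(2 * α)) ≤ 2 ^ ((1 : ℤ) - k) * (k ! * n ^ (-(2 * α))) := by
        rw [← mul_assoc]; exact le_mul_of_one_le_left (by positivity) h2k
    _ < 2 ^ ((1 : ℤ) - k) * ∏ r ∈ Icc (k + 1) n, (1 - 2 * α / r) := by gcongr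
end
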